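/- arXiv:1510.05990 — 6 statements merged into one kernel-verified Lean document; each statement's English description precedes it below -/
import Mathlib

section
/- If (L,·) is a σ-generalized right Bol loop (satisfying (xy·z)σ(y) = x(yz·σ(y)) for all x,y,z), then (L,·) has the right inverse property: (yx)x^ρ = y for all x,y ∈ L. -/
/-- A loop: a quasigroup with two-sided identity. -/
class MyLoop (L : Type*) extends Mul L, One L where
  one_mul : ∀ a : L, 1 * a = a
  mul_one : ∀ a : L, a * 1 = a
  ldiv : L → L → L
  rdiv : L → L → L
  mul_ldiv : ∀ a b : L, a * ldiv a b = b
  ldiv_mul : ∀ a b : L, ldiv a (a * b) = b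
  rdiv_mul : ∀ a b : L, rdiv a b * b = a
  mul_rdiv : ∀ a b : L, rdiv (a * b) b = a

namespace MyLoop

variable {L : Type*} [MyLoop L]

/-- right inverse: `x * rho x = 1` -/
def rho (x : L) : L := ldiv x 1

/-- left inverse: `lam x * x = 1` -/
def lam (x : L) : L := rdiv 1 x

/-- right translation `R_a : y ↦ y * a`, as a bijection -/
def Rt (a : L) : Equiv.Perm L :=
  ⟨fun y => y * a, fun y => rdiv y a, fun y => mul_rdiv y a, fun y => rdiv_mul y a⟩

/-- left translation `L_a : y ↦ a * y`, as a bijection -/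
def Lt (a : L) : Equiv.Perm L :=
  ⟨fun y => a * y, fun y => ldiv a y, fun y => ldiv_mul a y, fun y => mul_ldiv a y⟩

/-- σ-generalized (right) Bol loop identity -/
def GBol (σ : L → L) : Prop := ∀ x y z : L, ((x * y) * z) * σ y = x * ((y * z) * σ y)

/-- σ-generalized left Bol loop identity -/
def LBol (σ : L → L) : Prop := ∀ x y z : L, σ y * (z * (y * x)) = (σ y * (z * y)) * x

/-- σ-M-loop identity -/
def MLoopP (σ : L → L) : Prop := ∀ x y z : L, (x * y) * (z * σ x) = (x * (y * z)) * σ x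

/-- right inverse property -/
def RIP (L : Type*) [MyLoop L] : Prop := ∀ x y : L, (y * x) * rho x = y

/-- left inverse property -/
def LIP (L : Type*) [MyLoop L] : Prop := ∀ x y : L, lam x * (x * y) = y

/-- right nucleus -/
def Nrho (L : Type*) [MyLoop L] : Set L := {a | ∀ y z : L, (z * y) * a = z * (y * a)}

/-- middle nucleus -/
def Nmu (L : Type*) [MyLoop L] : Set L := {a | ∀ y z : L, (z * a) * y = z * (a * y)}

/-- multiplication of the A-holomorph `H = A × L`, `(α,x)∘(β,y) = (αβ, xβ · y)` -/
def hmul (A : Subgroup (MulAut L)) (p q : ↥A × L) : ↥A × L :=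
  (p.1 * q.1, (q.1 : MulAut L) p.2 * q.2)

/-- the right inverse of an element of the holomorph -/
def hrho (A : Subgroup (MulAut L)) (p : ↥A × L) : ↥A × L :=
  (p.1⁻¹, rho ((p.1⁻¹ : MulAut L) p.2))

/-- the holomorph is a σ'-generalized Bol loop, where `σ'(α,x) = (α, σ x)` -/
def HGBol (A : Subgroup (MulAut L)) (σ : L → L) : Prop :=
  ∀ p q r : ↥A × L,
    hmul A (hmul A (hmul A p q) r) (q.1, σ q.2) =
      hmul A p (hmul A (hmul A q r) (q.1, σ q.2))

end MyLoop

open MyLoop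

namespace MyLoop

variable {L : Type*} [MyLoop L]

theorem mul_rho (x : L) : x * rho x = 1 := mul_ldiv x 1

theorem mul_right_cancel {a b c : L} (h : a * c = b * c) : a = b := by
  rw [← mul_rdiv a c, h, mul_rdiv]

end MyLoop

/-- a σ-generalized right Bol loop has the right inverse property. -/
theorem gbol_rip {L : Type*} [MyLoop L] (σ : L → L) (h : GBol σ) : RIP L := by
  intro x y
  apply MyLoop.mul_right_cancel (c := σ x)
  rw [h, mul_rho, MyLoop.one_mul]
end

section
/- If (L,·) is a σ-generalized right Bol loop, then for every y ∈ L the triple (R_y^{-1}, L_y R_{σ(y)}, R_{σ(y)}) is an autotopism of (L,·), i.e., (x R_y^{-1})·(z L_y R_{σ(y)}) = (x·z) R_{σ(y)} for all x,z ∈ L. -/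
open MyLoop

namespace MyLoop

variable {L : Type*} [MyLoop L]

@[simp] theorem Rt_apply (a y : L) : Rt a y = y * a := rfl

@[simp] theorem Rt_symm_apply (a y : L) : (Rt a).symm y = rdiv y a := rfl

@[simp] theorem Lt_apply (a y : L) : Lt a y = a * y := rfl

end MyLoop

/-- in a σ-generalized right Bol loop,
`(R_y⁻¹, L_y R_{σ(y)}, R_{σ(y)})` is an autotopism. -/
theorem gbol_autotopism {L : Type*} [MyLoop L] (σ : L → L) (h : GBol σ) :
    ∀ y x z : L, (Rt y).symm x * (Rt (σ y)) ((Lt y) z) = (Rt (σ y)) (x * z) := by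
  intro y x z
  simp only [Rt_apply, Rt_symm_apply, Lt_apply]
  calc rdiv x y * ((y * z) * σ y) = ((rdiv x y * y) * z) * σ y := (h (rdiv x y) y z).symm
    _ = (x * z) * σ y := by rw [rdiv_mul]
end

section
/- Let R be the ring of 2×2 matrices over the field of three elements and G = R × R with operation (u,f)·(v,g) = (u+v, f+g+uv³). Then (G,·) is a loop which is a σ-generalized right Bol loop with σ: (u,f) ↦ (u,f)² = (2u, 2f+u⁴), but is not a right Bol loop. -/
open MyLoop

/-- 2×2 matrices over the field of three elements -/
abbrev M3 := Matrix (Fin 2) (Fin 2) (ZMod 3)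

/-- the operation `(u,f)·(v,g) = (u+v, f+g+u v³)` on `G = R × R` -/
def gmul (p q : M3 × M3) : M3 × M3 := (p.1 + q.1, p.2 + q.2 + p.1 * q.1 ^ 3)

/-! The first coordinate of `(u,f)·(v,g) = (u+v, f+g+uv³)` is the additive group, so the loop
axioms and the formula for squares hold over any ring. For the σ-Bol identity, σ(v,g) has first
coordinate `2v = -v` in characteristic 3, hence `v + w + 2v = w` and `(2v)³ = -v³`, and the cubic
correction terms on both sides cancel. Without σ, the Bol identity would force
`u(2v+w)³ = 2uv³ + uw³`, which fails for the nilpotent matrices `v = E₁₂`, `w = E₂₁`: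
`v³ = w³ = 0` while `(2v+w)² = 2` is invertible. -/

section CubeMul

variable {R : Type*} [Ring R]

def cubeMul (p q : R × R) : R × R := (p.1 + q.1, p.2 + q.2 + p.1 * q.1 ^ 3)

theorem cubeMul_zero_left (a : R × R) : cubeMul (0, 0) a = a := by
  simp [cubeMul]

theorem cubeMul_zero_right (a : R × R) : cubeMul a (0, 0) = a := by
  simp [cubeMul]

theorem cubeMul_eq_iff_left (a x b : R × R) :
    cubeMul a x = b ↔ x = (b.1 - a.1, b.2 - a.2 - a.1 * (b.1 - a.1) ^ 3) := by
  obtain ⟨a₁, a₂⟩ := a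
  obtain ⟨x₁, x₂⟩ := x
  obtain ⟨b₁, b₂⟩ := b
  simp only [cubeMul, Prod.mk.injEq]
  constructor
  · rintro ⟨rfl, rfl⟩
    simp only [add_sub_cancel_left, true_and]
    abel
  · rintro ⟨rfl, rfl⟩
    simp only [add_sub_cancel, true_and]
    abel

theorem cubeMul_eq_iff_right (a y b : R × R) :
    cubeMul y a = b ↔ y = (b.1 - a.1, b.2 - a.2 - (b.1 - a.1) * a.1 ^ 3) := by
  obtain ⟨a₁, a₂⟩ := a
  obtain ⟨y₁, y₂⟩ := y
  obtain ⟨b₁, b₂⟩ := b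
  simp only [cubeMul, Prod.mk.injEq]
  constructor
  · rintro ⟨rfl, rfl⟩
    simp only [add_sub_cancel_right, true_and]
    abel
  · rintro ⟨rfl, rfl⟩
    simp only [sub_add_cancel, true_and]
    abel

theorem existsUnique_cubeMul_left_eq (a b : R × R) : ∃! x, cubeMul a x = b :=
  ⟨_, (cubeMul_eq_iff_left a _ b).2 rfl, fun _ hx => (cubeMul_eq_iff_left a _ b).1 hx⟩

theorem existsUnique_cubeMul_right_eq (a b : R × R) : ∃! y, cubeMul y a = b :=
  ⟨_, (cubeMul_eq_iff_right a _ b).2 rfl, fun _ hy => (cubeMul_eq_iff_right a _ b).1 hy⟩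

theorem cubeMul_self (u f : R) : cubeMul (u, f) (u, f) = (2 * u, 2 * f + u ^ 4) := by
  simp only [cubeMul, two_mul, pow_succ' u 3]

theorem cubeMul_gBol_of_three_eq_zero (h3 : (3 : R) = 0) (x y z : R × R) :
    cubeMul (cubeMul (cubeMul x y) z) (cubeMul y y) =
      cubeMul x (cubeMul (cubeMul y z) (cubeMul y y)) := by
  obtain ⟨u, f⟩ := x
  obtain ⟨v, g⟩ := y
  obtain ⟨w, h⟩ := z
  have hsum : v + w + (v + v) = w :=
    calc v + w + (v + v) = w + 3 * v := by noncomm_ring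
      _ = w := by rw [h3, zero_mul, add_zero]
  have hcube : (v + v) ^ 3 = -v ^ 3 :=
    calc (v + v) ^ 3 = (3 * 3 - 1) * v ^ 3 := by noncomm_ring
      _ = -v ^ 3 := by rw [h3]; noncomm_ring
  simp only [cubeMul, Prod.mk.injEq]
  refine ⟨by abel, ?_⟩
  rw [hsum, hcube]
  noncomm_ring

end CubeMul

theorem gmul_not_rightBol :
    ¬ ∀ x y z : M3 × M3, gmul (gmul (gmul x y) z) y = gmul x (gmul (gmul y z) y) := fun h =>
  absurd (h (1, 0) (!![0, 1; 0, 0], 0) (!![0, 0; 1, 0], 0)) (by decide)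

/-- `(G,·)` is a loop (with identity `(0,0)`), squaring is
`(u,f) ↦ (2u, 2f+u⁴)`, `G` is a σ-generalized right Bol loop for σ = squaring,
but `G` is not a right Bol loop. -/
theorem example_gbl_not_bol :
    (∀ a : M3 × M3, gmul (0, 0) a = a) ∧
    (∀ a : M3 × M3, gmul a (0, 0) = a) ∧
    (∀ a b : M3 × M3, (∃! x, gmul a x = b) ∧ (∃! y, gmul y a = b)) ∧
    (∀ u f : M3, gmul (u, f) (u, f) = (2 * u, 2 * f + u ^ 4)) ∧
    (∀ x y z : M3 × M3,
      gmul (gmul (gmul x y) z) (gmul y y) = gmul x (gmul (gmul y z) (gmul y y))) ∧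
    ¬ (∀ x y z : M3 × M3, gmul (gmul (gmul x y) z) y = gmul x (gmul (gmul y z) y)) :=
  ⟨cubeMul_zero_left, cubeMul_zero_right,
    fun a b => ⟨existsUnique_cubeMul_left_eq a b, existsUnique_cubeMul_right_eq a b⟩,
    cubeMul_self, cubeMul_gBol_of_three_eq_zero (by decide), gmul_not_rightBol⟩
end

section
/- In a loop (G,·) with identity e, the map ϖ: Φ(G,·) → N_μ(G,·) defined by ϖ(U) = eU is a group isomorphism from the group of μ-regular bijections onto the middle nucleus. -/
open MyLoop

/-!
A μ-regular bijection `U` with adjoint `U'` satisfies `U x · w = x · (eU · w)` (put `y = eU · w` in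
the autotopism identity, after reading `U'⁻¹` off at `x = e`). With `w = e` this says `U` is the
right translation by `eU`, and as it stands it says `eU ∈ N_μ`. Conversely, right translation by
an element `a` of the middle nucleus is μ-regular with adjoint the left translation by `a`. Hence
`U ↦ eU` is a bijection, and `e(UV) = (eU)V = eU · eV`.
-/

namespace MyLoop

variable {L : Type*} [MyLoop L]

def IsMuRegular (U : Equiv.Perm L) : Prop :=
  ∃ U' : Equiv.Perm L, ∀ x y : L, U x * U'.symm y = x * y

theorem mul_left_cancel {a b c : L} (h : a * b = a * c) : b = c := by
  rw [← ldiv_mul a b, h, ldiv_mul]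

theorem IsMuRegular.mul_apply {U : Equiv.Perm L} (hU : IsMuRegular U) (x w : L) :
    U x * w = x * (U 1 * w) := by
  obtain ⟨U', hU'⟩ := hU
  have adjoint_symm : U'.symm (U 1 * w) = w :=
    MyLoop.mul_left_cancel (by rw [hU' 1, MyLoop.one_mul])
  simpa only [adjoint_symm] using hU' x (U 1 * w)

theorem IsMuRegular.eq_Rt {U : Equiv.Perm L} (hU : IsMuRegular U) : U = Rt (U 1) := by
  ext x
  simpa only [MyLoop.mul_one, Rt_apply] using hU.mul_apply x 1

theorem IsMuRegular.apply_one_mem_Nmu {U : Equiv.Perm L} (hU : IsMuRegular U) :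
    U 1 ∈ Nmu L := by
  intro y z
  rw [← hU.mul_apply, ← Rt_apply (U 1) z, ← hU.eq_Rt]

theorem isMuRegular_Rt {a : L} (ha : a ∈ Nmu L) : IsMuRegular (Rt a) :=
  ⟨Lt a, fun x y => (ha (ldiv a y) x).trans (congrArg (x * ·) (mul_ldiv a y))⟩

end MyLoop

/-- `ϖ(U) = eU` is a group isomorphism from the group `Φ(G,·)` of
μ-regular bijections onto the middle nucleus `N_μ(G,·)` (bijective and
multiplicative, where composition in `Φ` is `U` followed by `V`). -/
theorem mu_regular_iso_middle_nucleus {L : Type*} [MyLoop L]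
    (P : Set (Equiv.Perm L))
    (hP : P = {U | ∃ U' : Equiv.Perm L, ∀ x y : L, U x * U'.symm y = x * y}) :
    Set.BijOn (fun U : Equiv.Perm L => U 1) P (Nmu L) ∧
    ∀ U ∈ P, ∀ V ∈ P, (U.trans V) 1 = U 1 * V 1 := by
  subst hP
  change Set.BijOn _ {U | IsMuRegular U} _ ∧ ∀ U, IsMuRegular U → ∀ V, IsMuRegular V → _
  refine ⟨⟨fun U hU => hU.apply_one_mem_Nmu, ?_, ?_⟩, ?_⟩
  · intro U hU V hV (hUV : U 1 = V 1)
    rw [hU.eq_Rt, hV.eq_Rt, hUV]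
  · intro a ha
    exact ⟨Rt a, isMuRegular_Rt ha, MyLoop.one_mul a⟩
  · intro U _ V hV
    exact DFunLike.congr_fun hV.eq_Rt (U 1)
end

section
/- The A-holomorph (H,∘) of a loop (Q,·) has the right inverse property if and only if (Q,·) has the right inverse property. -/
open MyLoop

/-- The first coordinate always returns to `q.1`, so RIP of the holomorph at `(β, y)` is exactly
RIP of the loop at `β⁻¹ y`; taking `β = 1` recovers every instance of the latter. -/
theorem MyLoop.hmul_hmul_hrho {L : Type*} [MyLoop L] (A : Subgroup (MulAut L)) (p q : ↥A × L) :
    hmul A (hmul A q p) (hrho A p) =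
      (q.1, (q.2 * (p.1⁻¹ : MulAut L) p.2) * rho ((p.1⁻¹ : MulAut L) p.2)) := by
  simp [hmul, hrho]

/-- the A-holomorph has the right inverse property iff `(Q,·)` does. -/
theorem holomorph_rip_iff {L : Type*} [MyLoop L] (A : Subgroup (MulAut L)) :
    (∀ p q : ↥A × L, hmul A (hmul A q p) (hrho A p) = q) ↔ RIP L := by
  simp only [hmul_hmul_hrho, Prod.ext_iff, true_and]
  refine ⟨fun h x y => ?_, fun h p q => h _ _⟩
  simpa using h (1, x) (1, y)
end

section
/- Let (Q,·) be a RIP loop with self map σ and (H,∘) its A-holomorph with σ'(α,x) = (α,σ(x)). Then (H,∘) is a σ'-generalized Bol loop if and only if: (1) (Q,·) is a σ-generalized Bol loop, and (2) σ(x)^{-1}·σ(xγ^{-1}) ∈ N_ρ(Q,·) and σ(x)^{-1}·(σ(x))α^{-1} ∈ N_ρ(Q,·) for all x ∈ Q and all α,γ ∈ A(Q). -/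
open MyLoop

/-!
Unwinding the holomorph product, the σ'-generalized Bol identity of `H` for the elements
`(α, x), (β, y), (γ, z)` is the Bol identity of `Q` with middle factor `(βγ) y` and right
factor `σ y`. For a fixed middle factor `v` and one factor `t` satisfying such an identity, a
second factor `s` does too exactly when `t⁻¹ s` lies in the right nucleus: both identities say
that `n ↦ (n / t) s` commutes with left translations, so it is right multiplication by its
value `t⁻¹ s` at `1`. Taking `t = σ v` gives both nuclear conditions, the second one after
transporting the identity along `α⁻¹`.
-/

namespace MyLoop

variable {L : Type*} [MyLoop L]

def BolAt (v s : L) : Prop := ∀ u w : L, ((u * v) * w) * s = u * ((v * w) * s)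

theorem gbol_iff_forall_bolAt (σ : L → L) : GBol σ ↔ ∀ y : L, BolAt y (σ y) :=
  ⟨fun h y u w => h u y w, fun h x y z => h y x z⟩

theorem BolAt.map {v s : L} (h : BolAt v s) (f : MulAut L) : BolAt (f v) (f s) := by
  intro u w
  simpa [map_mul] using congrArg f (h (f.symm u) (f.symm w))

theorem rdiv_one_eq_rho (hrip : RIP L) (t : L) : rdiv 1 t = rho t := by
  simpa only [rdiv_mul, MyLoop.one_mul] using (hrip t (rdiv 1 t)).symm

theorem rho_mul_self (hrip : RIP L) (t : L) : rho t * t = 1 := by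
  rw [← rdiv_one_eq_rho hrip, rdiv_mul]

theorem mem_nrho_of_map_mul_left {φ : L → L} (hφ : ∀ u n : L, φ (u * n) = u * φ n) :
    φ 1 ∈ Nrho L := by
  have hφ_one : ∀ u : L, φ u = u * φ 1 := fun u => by simpa only [MyLoop.mul_one] using hφ u 1
  intro y z
  rw [← hφ_one, hφ, hφ_one]

theorem BolAt.rdiv_mul_mul_left {v t s : L} (ht : BolAt v t) (hs : BolAt v s) (u n : L) :
    rdiv (u * n) t * s = u * (rdiv n t * s) := by
  have hm : v * ldiv v (rdiv n t) = rdiv n t := mul_ldiv v _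
  have hrdiv : (u * v) * ldiv v (rdiv n t) = rdiv (u * n) t := by
    rw [← mul_rdiv ((u * v) * ldiv v (rdiv n t)) t, ht, hm, rdiv_mul]
  rw [← hrdiv, hs, hm]

theorem BolAt.rho_mul_mem_nrho (hrip : RIP L) {v t s : L} (ht : BolAt v t) (hs : BolAt v s) :
    rho t * s ∈ Nrho L := by
  rw [← rdiv_one_eq_rho hrip]
  exact mem_nrho_of_map_mul_left (φ := fun n => rdiv n t * s) (ht.rdiv_mul_mul_left hs)

theorem BolAt.of_rho_mul_mem_nrho (hrip : RIP L) {v t s : L} (ht : BolAt v t)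
    (hN : rho t * s ∈ Nrho L) : BolAt v s := by
  have hs : t * (rho t * s) = s := by
    have h := hN t (rho t)
    rw [rho_mul_self hrip, MyLoop.one_mul] at h
    rw [← ldiv_mul (rho t) (t * (rho t * s)), ← h, ldiv_mul]
  intro u w
  calc ((u * v) * w) * s = (((u * v) * w) * t) * (rho t * s) := by rw [hN, hs]
    _ = u * (((v * w) * t) * (rho t * s)) := by rw [ht, hN]
    _ = u * ((v * w) * s) := by rw [hN, hs]

theorem hgbol_iff_forall_bolAt (A : Subgroup (MulAut L)) (σ : L → L) :
    HGBol A σ ↔ ∀ (γ : A) (y : L), BolAt ((γ : MulAut L) y) (σ y) := by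
  constructor
  · intro h γ y u w
    simpa [hmul] using congrArg Prod.snd (h (1, (γ : MulAut L).symm u) (1, y) (γ, w))
  · intro h p q r
    simp only [hmul, Prod.mk.injEq]
    refine ⟨by simp only [mul_assoc], ?_⟩
    simpa [map_mul] using
      h (q.1 * r.1) q.2 ((((q.1 * r.1) * q.1 : A) : MulAut L) p.2) ((q.1 : MulAut L) r.2)

end MyLoop

/-- for a RIP loop `Q`, the A-holomorph is a σ'-generalized Bol loop
iff `Q` is a σ-generalized Bol loop and `σ(x)⁻¹·σ(xγ⁻¹)` and `σ(x)⁻¹·(σ(x))α⁻¹`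
lie in the right nucleus, for all `x ∈ Q` and `α, γ ∈ A(Q)`. -/
theorem holomorph_gbol_iff_nucleus {L : Type*} [MyLoop L] (σ : L → L)
    (A : Subgroup (MulAut L)) (hrip : RIP L) :
    HGBol A σ ↔
      (GBol σ ∧
        ∀ (x : L) (α γ : ↥A),
          rho (σ x) * σ ((γ⁻¹ : MulAut L) x) ∈ Nrho L ∧
          rho (σ x) * (α⁻¹ : MulAut L) (σ x) ∈ Nrho L) := by
  rw [hgbol_iff_forall_bolAt, gbol_iff_forall_bolAt]
  constructor
  · intro h
    have hbase : ∀ y : L, BolAt y (σ y) := by simpa using h 1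
    refine ⟨hbase, fun x α γ => ⟨?_, ?_⟩⟩
    · exact (hbase x).rho_mul_mem_nrho hrip (by simpa using h γ ((γ⁻¹ : MulAut L) x))
    · exact (hbase x).rho_mul_mem_nrho hrip (by simpa using (h α x).map (α⁻¹ : MulAut L))
  · rintro ⟨hbase, hN⟩ γ y
    refine (hbase _).of_rho_mul_mem_nrho hrip ?_
    simpa using (hN ((γ : MulAut L) y) γ γ).1
end
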